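/- arXiv:math/0611416 — 4 statements merged into one kernel-verified Lean document; each statement's English description precedes it below -/
import Mathlib

section
/- Let (G_n) be a sequence of finite connected graphs with |G_n| → ∞, and for each n let v_n be a vertex of G_n such that Hom_{v_n}(G_n, ℤ) is nonempty. Let r = r(n) ∈ ℕ and let V_n(r) denote the maximal number of vertices in a ball of radius r in G_n. Suppose there exists a constant c < 1 such that for all sufficiently large n, V_n(r(n)) ≤ c·log₂|G_n|. Then, for f_n chosen uniformly at random from Hom_{v_n}(G_n, ℤ), the probability Pr[R(f_n) ≤ r(n)] tends to 0 as n → ∞. -/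
/-!
Call `f ∈ Hom_{v₀}(G, ℤ)` short if its range has at most `r` values, and let `U = V(r)`.
For a short `f` and a vertex `x` at distance at least `r` from `v₀`, replace `f` on the open ball
of radius `r` around `x` by its largest 1-Lipschitz extension from the complement; by parity this
is again a homomorphism `g`. Since `f` varies by less than `r`, `g(x)` exceeds every value of `g`
outside the ball, so `x` lies within distance `r` of a maximum of `g`; and `f` is recovered from
`g`, `f(x) ∈ [-r, r]` and the up/down steps of `f` along a shortest-path tree of the ball. Hence
`#short · (N - U) ≤ (2r + 1) 2^U U · #Hom`. If `U ≤ c log₂ N` with `c < 1`, then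
`2^U ≤ N^c`, `2U ≤ N` and `r < U`, so the proportion of short maps is
`O(log² N · N^(c - 1)) → 0`.
-/

open Filter

/-- The set of graph homomorphisms from `G` to `ℤ` sending `v0` to `0`:
maps changing by exactly `1` along every edge. -/
def ZHomSet {V : Type} (G : SimpleGraph V) (v0 : V) : Set (V → ℤ) :=
  {f | (∀ a b, G.Adj a b → |f a - f b| = 1) ∧ f v0 = 0}

/-- The maximal number of vertices in a ball of radius `r` in `G`. -/
noncomputable def maxBall {V : Type} [Fintype V] (G : SimpleGraph V) (r : ℕ) : ℕ :=
  Finset.univ.sup fun x : V => {u | G.dist x u ≤ r}.ncard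

namespace SimpleGraph

section

variable {V : Type*} {G : SimpleGraph V}

theorem Walk.dist_getVert_of_length_eq_dist {u v : V} {p : G.Walk u v}
    (hp : p.length = G.dist u v) (k : ℕ) : G.dist u (p.getVert k) = min k p.length := by
  rw [← length_eq_dist_of_subwalk hp (p.isSubwalk_take k), Walk.take_length]

theorem Connected.exists_adj_dist_add_one (hG : G.Connected) {x u : V} (h : x ≠ u) :
    ∃ w, G.Adj w u ∧ G.dist x w + 1 = G.dist x u := by
  obtain ⟨p, hp⟩ := hG.exists_walk_length_eq_dist x u
  have hpos : 0 < p.length := hp ▸ hG.pos_dist_of_ne h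
  refine ⟨p.getVert (p.length - 1), ?_, ?_⟩
  · have := p.adj_getVert_succ (Nat.sub_lt hpos one_pos)
    rwa [show p.length - 1 + 1 = p.length by omega, Walk.getVert_length] at this
  · rw [Walk.dist_getVert_of_length_eq_dist hp]
    omega

end

section

variable {V : Type} [Fintype V] {G : SimpleGraph V}

noncomputable def closedBall (G : SimpleGraph V) (x : V) (r : ℕ) : Finset V :=
  {u | G.dist x u ≤ r}

theorem mem_closedBall {x u : V} {r : ℕ} : u ∈ G.closedBall x r ↔ G.dist x u ≤ r := by
  simp [closedBall]

theorem card_closedBall_le_maxBall (x : V) (r : ℕ) : (G.closedBall x r).card ≤ maxBall G r := by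
  rw [← Set.ncard_coe_finset]
  exact Finset.le_sup (f := fun x : V => {u | G.dist x u ≤ r}.ncard) (Finset.mem_univ x)
    |>.trans_eq' (by simp [closedBall])

theorem add_one_le_card_closedBall (hG : G.Connected) {x y : V} {r : ℕ} (hy : r < G.dist x y) :
    r + 1 ≤ (G.closedBall x r).card := by
  obtain ⟨p, hp⟩ := hG.exists_walk_length_eq_dist x y
  have hdist k (hk : k ≤ r) : G.dist x (p.getVert k) = k := by
    rw [Walk.dist_getVert_of_length_eq_dist hp]
    omega
  simpa using Finset.card_le_card_of_injOn (s := Finset.range (r + 1)) p.getVert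
    (fun k hk => mem_closedBall.mpr (by grind))
    (fun k hk l hl hkl => by grind)

theorem add_one_le_maxBall (hG : G.Connected) {r : ℕ} (h : maxBall G r < Fintype.card V) :
    r + 1 ≤ maxBall G r := by
  have x : V := hG.nonempty.some
  obtain ⟨y, hy⟩ : ∃ y, y ∉ G.closedBall x r := by
    by_contra! hall
    have := Finset.card_le_card (s := Finset.univ) fun y _ => hall y
    have := G.card_closedBall_le_maxBall x r
    rw [Finset.card_univ] at *
    omega
  exact (add_one_le_card_closedBall hG (by simpa [mem_closedBall] using hy)).trans
    (G.card_closedBall_le_maxBall x r)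

end

end SimpleGraph

def IsZHom {V : Type*} (G : SimpleGraph V) (f : V → ℤ) : Prop :=
  ∀ a b, G.Adj a b → |f a - f b| = 1

section Hom

variable {V : Type*} {G : SimpleGraph V} {f : V → ℤ}

theorem IsZHom.sub_eq_one_or_neg_one (hf : IsZHom G f) {a b : V} (h : G.Adj a b) :
    f a - f b = 1 ∨ f a - f b = -1 :=
  (abs_eq zero_le_one).mp (hf a b h)

theorem IsZHom.even_sub_add_length (hf : IsZHom G f) {a b : V} (p : G.Walk a b) :
    Even (f a - f b + p.length) := by
  induction p with
  | nil => simp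
  | cons h q ih =>
    have := hf.sub_eq_one_or_neg_one h
    rw [Int.even_iff] at ih ⊢
    push_cast [SimpleGraph.Walk.length_cons]
    omega

theorem IsZHom.abs_sub_le_length (hf : IsZHom G f) {a b : V} (p : G.Walk a b) :
    |f a - f b| ≤ p.length := by
  induction p with
  | nil => simp
  | cons h q ih =>
    have := hf.sub_eq_one_or_neg_one h
    rw [abs_le] at ih ⊢
    push_cast [SimpleGraph.Walk.length_cons]
    omega

theorem IsZHom.even_sub_add_dist (hf : IsZHom G f) (hG : G.Connected) (a b : V) :
    Even (f a - f b + G.dist a b) := by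
  obtain ⟨p, hp⟩ := hG.exists_walk_length_eq_dist a b
  simpa [hp] using hf.even_sub_add_length p

theorem IsZHom.abs_sub_le_dist (hf : IsZHom G f) (hG : G.Connected) (a b : V) :
    |f a - f b| ≤ G.dist a b := by
  obtain ⟨p, hp⟩ := hG.exists_walk_length_eq_dist a b
  simpa [hp] using hf.abs_sub_le_length p

theorem IsZHom.Icc_subset_range (hf : IsZHom G f) {a b : V} (p : G.Walk a b) :
    Set.Icc (f a) (f b) ⊆ Set.range f := by
  induction p with
  | nil => exact fun t ht => ⟨_, le_antisymm ht.1 ht.2⟩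
  | cons h q ih =>
    intro t ht
    rcases ht.1.eq_or_lt with rfl | hlt
    · exact ⟨_, rfl⟩
    · have := hf.sub_eq_one_or_neg_one h
      exact ih ⟨by omega, ht.2⟩

theorem IsZHom.abs_sub_lt_ncard_range [Finite V] (hf : IsZHom G f) (hG : G.Preconnected)
    (a b : V) : |f a - f b| < (Set.range f).ncard := by
  wlog hab : f a ≤ f b generalizing a b
  · rw [abs_sub_comm]
    exact this b a (by omega)
  have h := Set.ncard_le_ncard (hf.Icc_subset_range (hG a b).some) (Set.finite_range f)
  rw [← Finset.coe_Icc, Set.ncard_coe_finset, Int.card_Icc] at h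
  rw [abs_sub_comm, abs_of_nonneg (by omega)]
  omega

theorem IsZHom.eq_of_eq_of_steps {g : V → ℤ} (hf : IsZHom G f) (hg : IsZHom G g) {x : V}
    {parent : V → V}
    (hparent : ∀ u ≠ x, G.Adj (parent u) u ∧ G.dist x (parent u) + 1 = G.dist x u) {r : ℕ}
    (hx : f x = g x)
    (hstep : ∀ u, G.dist x u < r → (f u = f (parent u) + 1 ↔ g u = g (parent u) + 1))
    (hfar : ∀ u, r ≤ G.dist x u → f u = g u) : f = g := by
  funext u
  induction hd : G.dist x u using Nat.strong_induction_on generalizing u with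
  | _ d ih =>
    by_cases hrd : r ≤ d
    · exact hfar u (hd ▸ hrd)
    by_cases hux : u = x
    · exact hux ▸ hx
    obtain ⟨hadj, hdist⟩ := hparent u hux
    have := ih _ (by omega) (parent u) rfl
    have := hstep u (by omega)
    have := hf.sub_eq_one_or_neg_one hadj
    have := hg.sub_eq_one_or_neg_one hadj
    omega

end Hom

section UpperExtension

variable {V : Type*} {G : SimpleGraph V} {T : Finset V} {f : V → ℤ}

/-- For a homomorphism `f`, the largest 1-Lipschitz function agreeing with `f` on `T`. -/
noncomputable def upperExtension (G : SimpleGraph V) (T : Finset V) (f : V → ℤ) (u : V) : ℤ :=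
  if hT : T.Nonempty then T.inf' hT fun b => f b + G.dist u b else f u

theorem upperExtension_le {b : V} (hb : b ∈ T) (u : V) :
    upperExtension G T f u ≤ f b + G.dist u b := by
  rw [upperExtension, dif_pos ⟨b, hb⟩]
  exact Finset.inf'_le _ hb

theorem exists_upperExtension_eq (hT : T.Nonempty) (u : V) :
    ∃ b ∈ T, upperExtension G T f u = f b + G.dist u b := by
  rw [upperExtension, dif_pos hT]
  exact Finset.exists_mem_eq_inf' hT _

theorem upperExtension_le_add_dist (hG : G.Connected) (hT : T.Nonempty) (a b : V) :
    upperExtension G T f a ≤ upperExtension G T f b + G.dist a b := by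
  obtain ⟨t, ht, hbt⟩ := exists_upperExtension_eq (G := G) (f := f) hT b
  have : G.dist a t ≤ G.dist a b + G.dist b t := hG.dist_triangle
  have := upperExtension_le (G := G) (f := f) ht a
  omega

theorem IsZHom.upperExtension_eq_of_mem (hf : IsZHom G f) (hG : G.Connected) {u : V}
    (hu : u ∈ T) : upperExtension G T f u = f u := by
  obtain ⟨b, -, hb⟩ := exists_upperExtension_eq (G := G) (f := f) ⟨u, hu⟩ u
  have := upperExtension_le (G := G) (f := f) hu u
  have := abs_le.mp (hf.abs_sub_le_dist hG u b)
  simp only [SimpleGraph.dist_self, Nat.cast_zero, add_zero] at *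
  omega

theorem IsZHom.even_upperExtension_sub (hf : IsZHom G f) (hG : G.Connected) (u : V) :
    Even (upperExtension G T f u - f u) := by
  by_cases hT : T.Nonempty
  · obtain ⟨b, -, hb⟩ := exists_upperExtension_eq (G := G) (f := f) hT u
    rw [hb, SimpleGraph.dist_comm]
    convert hf.even_sub_add_dist hG b u using 1
    ring
  · simp [upperExtension, hT]

theorem IsZHom.isZHom_upperExtension (hf : IsZHom G f) (hG : G.Connected) :
    IsZHom G (upperExtension G T f) := by
  rcases T.eq_empty_or_nonempty with rfl | hT
  · rwa [show upperExtension G ∅ f = f from funext fun u => by simp [upperExtension]]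
  intro a b hab
  have hab' := upperExtension_le_add_dist (f := f) hG hT a b
  have hba' := upperExtension_le_add_dist (f := f) hG hT b a
  rw [SimpleGraph.dist_eq_one_iff_adj.mpr hab] at hab'
  rw [SimpleGraph.dist_eq_one_iff_adj.mpr hab.symm] at hba'
  have ha := hf.even_upperExtension_sub (T := T) hG a
  have hb := hf.even_upperExtension_sub (T := T) hG b
  have := hf.sub_eq_one_or_neg_one hab
  rw [Int.even_iff] at ha hb
  rw [abs_eq zero_le_one]
  omega

end UpperExtension

section Raise

variable {V : Type} [Fintype V] {G : SimpleGraph V} {f : V → ℤ} {r : ℕ} {x : V}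

noncomputable def raise (G : SimpleGraph V) (r : ℕ) (f : V → ℤ) (x : V) : V → ℤ :=
  upperExtension G {b | r ≤ G.dist x b} f

theorem IsZHom.raise_eq_of_le (hf : IsZHom G f) (hG : G.Connected) {u : V}
    (hu : r ≤ G.dist x u) : raise G r f x u = f u :=
  hf.upperExtension_eq_of_mem hG (by simpa using hu)

theorem raise_mem_ZHomSet (hG : G.Connected) {v0 : V} (hf : f ∈ ZHomSet G v0)
    (hx : r ≤ G.dist x v0) : raise G r f x ∈ ZHomSet G v0 :=
  ⟨IsZHom.isZHom_upperExtension hf.1 hG, (IsZHom.raise_eq_of_le hf.1 hG hx).trans hf.2⟩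

theorem IsZHom.dist_lt_of_raise_le (hf : IsZHom G f) (hG : G.Connected)
    (hran : (Set.range f).ncard ≤ r) {v0 xm : V} (hx : r ≤ G.dist x v0)
    (hmax : raise G r f x x ≤ raise G r f x xm) : G.dist x xm < r := by
  by_contra! hxm
  obtain ⟨b, hb, hxb⟩ := exists_upperExtension_eq (G := G) (f := f)
    (T := {b | r ≤ G.dist x b}) ⟨v0, by simpa using hx⟩ x
  rw [raise, hxb, ← raise, hf.raise_eq_of_le hG hxm] at hmax
  have := abs_lt.mp (hf.abs_sub_lt_ncard_range hG.preconnected xm b)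
  have : r ≤ G.dist x b := by simpa using hb
  omega

end Raise

section Counting

variable {V : Type} [Fintype V] {G : SimpleGraph V}

section

variable {r : ℕ} {v0 : V} {A : Finset (V → ℤ)}

theorem card_filter_raise_eq_le (hG : G.Connected)
    (hA : ∀ f ∈ A, IsZHom G f ∧ f v0 = 0 ∧ (Set.range f).ncard ≤ r)
    (x : V) (g : V → ℤ) :
    (A.filter fun f => raise G r f x = g).card ≤ (2 * r + 1) * 2 ^ maxBall G r := by
  choose! parent hparent using fun u (h : u ≠ x) => hG.exists_adj_dist_add_one h.symm
  let code (f : V → ℤ) : ℤ × Finset V :=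
    (f x, (G.closedBall x r).filter fun u => f u = f (parent u) + 1)
  calc _ ≤ (Finset.Icc (-r : ℤ) r ×ˢ (G.closedBall x r).powerset).card := by
        refine Finset.card_le_card_of_injOn code (fun f hf => ?_) fun f hf f' hf' hff' => ?_
        · obtain ⟨hfA, -⟩ := Finset.mem_filter.mp hf
          obtain ⟨hf, hf0, hran⟩ := hA f hfA
          have := abs_lt.mp (hf.abs_sub_lt_ncard_range hG.preconnected x v0)
          simp only [code, Finset.coe_product, Set.mem_prod, Finset.coe_Icc, Set.mem_Icc,
            Finset.mem_coe, Finset.mem_powerset]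
          exact ⟨by omega, Finset.filter_subset _ _⟩
        · obtain ⟨hfA, hfg⟩ := Finset.mem_filter.mp hf
          obtain ⟨hf'A, hf'g⟩ := Finset.mem_filter.mp hf'
          obtain ⟨hx, hpat⟩ := Prod.ext_iff.mp hff'
          refine (hA f hfA).1.eq_of_eq_of_steps (hA f' hf'A).1 hparent (r := r) hx
            (fun u hu => ?_) fun u hu => ?_
          · simpa [code, SimpleGraph.mem_closedBall, hu.le] using congrArg (u ∈ ·) hpat
          · rw [← (hA f hfA).1.raise_eq_of_le hG hu, ← (hA f' hf'A).1.raise_eq_of_le hG hu,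
              hfg, hf'g]
    _ ≤ (2 * r + 1) * 2 ^ maxBall G r := by
        rw [Finset.card_product, Int.card_Icc, Finset.card_powerset]
        gcongr
        · omega
        · exact one_le_two
        · exact G.card_closedBall_le_maxBall x r

theorem card_filter_prod_raise_eq_le [DecidableEq V] (hG : G.Connected)
    (hA : ∀ f ∈ A, IsZHom G f ∧ f v0 = 0 ∧ (Set.range f).ncard ≤ r) (g : V → ℤ) :
    ((A ×ˢ ({x | r ≤ G.dist x v0} : Finset V)).filter fun p => raise G r p.1 p.2 = g).card ≤
      (2 * r + 1) * 2 ^ maxBall G r * maxBall G r := by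
  have : Nonempty V := hG.nonempty
  obtain ⟨xm, -, hxm⟩ := Finset.exists_max_image Finset.univ g Finset.univ_nonempty
  calc _ ≤ (2 * r + 1) * 2 ^ maxBall G r * (G.closedBall xm r).card := by
        refine Finset.card_le_mul_card_image_of_maps_to (f := fun p : (V → ℤ) × V => p.2)
          (fun p hp => ?_) _ fun x _ => ?_
        · simp only [Finset.mem_filter, Finset.mem_product, Finset.mem_univ, true_and] at hp
          obtain ⟨⟨hfA, hx⟩, hpg⟩ := hp
          have := (hA _ hfA).1.dist_lt_of_raise_le hG (hA _ hfA).2.2 hx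
            (hpg ▸ hxm _ (Finset.mem_univ _))
          rw [SimpleGraph.mem_closedBall, SimpleGraph.dist_comm]
          omega
        · refine le_trans (Finset.card_le_card_of_injOn Prod.fst (t := A.filter fun f =>
            raise G r f x = g) (fun p hp => ?_) fun p hp q hq hpq => ?_)
            (card_filter_raise_eq_le hG hA x g)
          · simp only [Finset.mem_coe, Finset.mem_filter, Finset.mem_product] at hp ⊢
            obtain ⟨⟨⟨hfA, -⟩, hpg⟩, rfl⟩ := hp
            exact ⟨hfA, hpg⟩
          · simp only [Finset.mem_coe, Finset.mem_filter] at hp hq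
            exact Prod.ext hpq (hp.2.trans hq.2.symm)
    _ ≤ _ := by gcongr; exact G.card_closedBall_le_maxBall xm r

theorem card_mul_card_far_le [DecidableEq V] (hG : G.Connected)
    (hA : ∀ f ∈ A, IsZHom G f ∧ f v0 = 0 ∧ (Set.range f).ncard ≤ r)
    {H : Finset (V → ℤ)} (hH : ∀ f ∈ ZHomSet G v0, f ∈ H) :
    A.card * ({x | r ≤ G.dist x v0} : Finset V).card ≤
      (2 * r + 1) * 2 ^ maxBall G r * maxBall G r * H.card := by
  rw [← Finset.card_product]
  refine Finset.card_le_mul_card_image_of_maps_to (fun p hp => hH _ ?_) _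
    fun g _ => card_filter_prod_raise_eq_le hG hA g
  obtain ⟨hfA, hx⟩ := Finset.mem_product.mp hp
  obtain ⟨hf, hf0, -⟩ := hA _ hfA
  exact raise_mem_ZHomSet hG ⟨hf, hf0⟩ (by simpa [SimpleGraph.dist_comm] using hx)

end

theorem finite_ZHomSet (hG : G.Connected) (v0 : V) : (ZHomSet G v0).Finite := by
  let D : ℤ := (Finset.univ.sup (G.dist v0) : ℕ)
  refine (Set.Finite.pi' fun _ => Set.finite_Icc (-D) D).subset fun f hf u => ?_
  have hu := IsZHom.abs_sub_le_dist hf.1 hG v0 u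
  have : G.dist v0 u ≤ Finset.univ.sup (G.dist v0) := Finset.le_sup (Finset.mem_univ u)
  rw [hf.2, zero_sub, abs_neg] at hu
  exact abs_le.mp (hu.trans (Int.ofNat_le.mpr this))

theorem card_sub_maxBall_le (v0 : V) (r : ℕ) :
    Fintype.card V - maxBall G r ≤ ({x | r ≤ G.dist x v0} : Finset V).card := by
  have hsplit := Finset.card_filter_add_card_filter_not (s := Finset.univ)
    fun x : V => r ≤ G.dist x v0
  have hnear : (Finset.univ.filter fun x : V => ¬ r ≤ G.dist x v0).card ≤ maxBall G r := by
    refine (Finset.card_le_card fun x hx => ?_).trans (G.card_closedBall_le_maxBall v0 r)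
    rw [Finset.mem_filter] at hx
    rw [SimpleGraph.mem_closedBall, SimpleGraph.dist_comm]
    omega
  rw [Finset.card_univ] at hsplit
  omega

theorem ncard_lowRange_mul_le (hG : G.Connected) (v0 : V) (r : ℕ) :
    {f ∈ ZHomSet G v0 | (Set.range f).ncard ≤ r}.ncard * (Fintype.card V - maxBall G r) ≤
      (2 * r + 1) * 2 ^ maxBall G r * maxBall G r * (ZHomSet G v0).ncard := by
  classical
  set H := (finite_ZHomSet hG v0).toFinset
  have hA : {f ∈ ZHomSet G v0 | (Set.range f).ncard ≤ r} =
      ↑(H.filter fun f => (Set.range f).ncard ≤ r) := by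
    ext f
    simp [H]
  rw [hA, Set.ncard_coe_finset, Set.ncard_eq_toFinset_card _ (finite_ZHomSet hG v0)]
  refine (Nat.mul_le_mul_left _ (card_sub_maxBall_le v0 r)).trans
    (card_mul_card_far_le hG (fun f hf => ?_) fun f hf => by simpa [H] using hf)
  obtain ⟨hfH, hran⟩ := Finset.mem_filter.mp hf
  obtain ⟨hf, hf0⟩ := (finite_ZHomSet hG v0).mem_toFinset.mp hfH
  exact ⟨hf, hf0, hran⟩

end Counting

theorem tendsto_logb_sq_mul_rpow_sub_one {c : ℝ} (hc : c < 1) :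
    Tendsto (fun x : ℝ => Real.logb 2 x ^ 2 * x ^ (c - 1)) atTop (nhds 0) := by
  have := ((isLittleO_log_rpow_rpow_atTop 2 (sub_pos.2 hc)).tendsto_div_nhds_zero).div_const
    (Real.log 2 ^ 2)
  rw [zero_div] at this
  refine this.congr' ?_
  filter_upwards [eventually_gt_atTop 0] with x hx
  rw [Real.logb, Real.rpow_two, show c - 1 = -(1 - c) by ring, Real.rpow_neg hx.le]
  field_simp

theorem two_pow_le_rpow_of_le_mul_logb {U : ℕ} {c y : ℝ} (hy : 0 < y)
    (hU : (U : ℝ) ≤ c * Real.logb 2 y) : (2 : ℝ) ^ U ≤ y ^ c := by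
  calc (2 : ℝ) ^ U = 2 ^ (U : ℝ) := (Real.rpow_natCast 2 U).symm
    _ ≤ 2 ^ (Real.logb 2 y * c) :=
        Real.rpow_le_rpow_of_exponent_le one_le_two (hU.trans_eq (mul_comm _ _))
    _ = y ^ c := by rw [Real.rpow_mul zero_le_two, Real.rpow_logb two_pos (by norm_num) hy]

theorem ncard_lowRange_div_le {V : Type} [Fintype V] {G : SimpleGraph V} (hG : G.Connected)
    (v0 : V) {r : ℕ} {c : ℝ} (hc : c < 1)
    (hV : (maxBall G r : ℝ) ≤ c * Real.logb 2 (Fintype.card V)) :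
    ({f ∈ ZHomSet G v0 | (Set.range f).ncard ≤ r}.ncard : ℝ) / (ZHomSet G v0).ncard ≤
      4 * c ^ 2 * (Real.logb 2 (Fintype.card V) ^ 2 * (Fintype.card V : ℝ) ^ (c - 1)) := by
  set a := {f ∈ ZHomSet G v0 | (Set.range f).ncard ≤ r}.ncard
  set h := (ZHomSet G v0).ncard
  set N := Fintype.card V
  set U := maxBall G r
  set L := Real.logb 2 N
  have hN : 0 < N := Fintype.card_pos_iff.mpr hG.nonempty
  have hNR : (0 : ℝ) < N := by exact_mod_cast hN
  have hpow := two_pow_le_rpow_of_le_mul_logb hNR hV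
  have h2U : 2 * U ≤ N := by
    have : (N : ℝ) ^ c ≤ N := by
      simpa using Real.rpow_le_rpow_of_exponent_le (by exact_mod_cast hN) hc.le
    have : 2 ^ U ≤ N := by exact_mod_cast hpow.trans this
    rcases U with _ | U
    · omega
    · have := Nat.lt_two_pow_self (n := U)
      rw [pow_succ] at *
      omega
  have hrU : r + 1 ≤ U := SimpleGraph.add_one_le_maxBall hG (by omega)
  have hkey : (a : ℝ) * (N - U) ≤ (2 * r + 1) * 2 ^ U * U * h := by
    have := ncard_lowRange_mul_le hG v0 r
    rw [← Nat.cast_sub (by omega)]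
    exact_mod_cast this
  rcases Nat.eq_zero_or_pos h with h0 | hpos
  · rw [h0, Nat.cast_zero, div_zero]
    positivity
  have h1 : (a : ℝ) * N ≤ 4 * U ^ 2 * N ^ c * h := by
    have : (2 * U : ℝ) ≤ N := by exact_mod_cast h2U
    have : (2 * r + 1 : ℝ) ≤ 2 * U := by
      have : (r + 1 : ℝ) ≤ U := by exact_mod_cast hrU
      linarith
    calc (a : ℝ) * N ≤ 2 * (a * (N - U)) := by nlinarith [(a.cast_nonneg : (0 : ℝ) ≤ a)]
      _ ≤ 2 * ((2 * r + 1) * 2 ^ U * U * h) := by gcongr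
      _ ≤ 2 * ((2 * U) * N ^ c * U * h) := by gcongr
      _ = 4 * U ^ 2 * N ^ c * h := by ring
  have h2 : (U : ℝ) ^ 2 ≤ c ^ 2 * L ^ 2 := by
    rw [← mul_pow]
    exact pow_le_pow_left₀ (by positivity) hV 2
  rw [div_le_iff₀ (by exact_mod_cast hpos)]
  calc (a : ℝ) = a * N / N := by field_simp
    _ ≤ 4 * U ^ 2 * N ^ c * h / N := by gcongr
    _ = 4 * U ^ 2 * N ^ (c - 1) * h := by rw [Real.rpow_sub_one hNR.ne']; ring
    _ ≤ 4 * (c ^ 2 * L ^ 2) * N ^ (c - 1) * h := by gcongr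
    _ = 4 * c ^ 2 * (L ^ 2 * N ^ (c - 1)) * h := by ring

theorem stmt0_general (N : ℕ → ℕ) (hN : Tendsto N atTop atTop)
    (G : ∀ n, SimpleGraph (Fin (N n))) (hconn : ∀ n, (G n).Connected)
    (v : ∀ n, Fin (N n))
    (r : ℕ → ℕ) (c : ℝ) (hc : c < 1)
    (hV : ∀ᶠ n in atTop, (maxBall (G n) (r n) : ℝ) ≤ c * Real.logb 2 (N n)) :
    Tendsto (fun n =>
      (({f ∈ ZHomSet (G n) (v n) | (Set.range f).ncard ≤ r n}).ncard : ℝ)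
        / ((ZHomSet (G n) (v n)).ncard : ℝ))
      atTop (nhds 0) := by
  have hbound : Tendsto (fun n => 4 * c ^ 2 * (Real.logb 2 (N n) ^ 2 * (N n : ℝ) ^ (c - 1)))
      atTop (nhds 0) := by
    simpa using ((tendsto_logb_sq_mul_rpow_sub_one hc).comp
      (tendsto_natCast_atTop_atTop.comp hN)).const_mul (4 * c ^ 2)
  refine squeeze_zero' (Eventually.of_forall fun n => by positivity) ?_ hbound
  filter_upwards [hV] with n hVn
  simpa using ncard_lowRange_div_le (hconn n) (v n) hc (by simpa using hVn)

theorem stmt0 (N : ℕ → ℕ) (hN : Tendsto N atTop atTop)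
    (G : ∀ n, SimpleGraph (Fin (N n))) (hconn : ∀ n, (G n).Connected)
    (v : ∀ n, Fin (N n))
    (hne : ∀ n, (ZHomSet (G n) (v n)).Nonempty)
    (r : ℕ → ℕ) (c : ℝ) (hc : c < 1)
    (hV : ∀ᶠ n in atTop, (maxBall (G n) (r n) : ℝ) ≤ c * Real.logb 2 (N n)) :
    Tendsto (fun n =>
      (({f ∈ ZHomSet (G n) (v n) | (Set.range f).ncard ≤ r n}).ncard : ℝ)
        / ((ZHomSet (G n) (v n)).ncard : ℝ))
      atTop (nhds 0) :=
  stmt0_general N hN G hconn v r c hc hV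
end

section
/- Let n ≥ 4 be even, k ∈ ℕ, and let f ∈ H_{n,k}. If i ∈ ℤ_n is such that the i-layer is non-constant in f, then there exists z ∈ ℤ such that f({i+1} × [k]) = f({i−1} × [k]) = {z}; in particular, both the (i+1)-layer and the (i−1)-layer are constant in f. -/
open Filter

/-- The graph `C_{n,k}`: vertex set `ℤ_n × [k]`, with edges
`(i,s) ∼ (i+1,t)` for all `i ∈ ℤ_n` and `s,t ∈ [k]` (addition modulo `n`). -/
def Cnk (n k : ℕ) : SimpleGraph (ZMod n × Fin k) :=
  SimpleGraph.fromRel fun a b => a.1 + 1 = b.1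

/-- `f` is a graph homomorphism to `ℤ`: it changes by exactly `1` along edges. -/
def IsHomZ {V : Type} (G : SimpleGraph V) (f : V → ℤ) : Prop :=
  ∀ a b, G.Adj a b → |f a - f b| = 1

/-- `H_{n,k}`: homomorphisms from `C_{n,k}` to `ℤ` with `f(0,1) = 0`. -/
def Hnk (n k : ℕ) (hk : 0 < k) : Set (ZMod n × Fin k → ℤ) :=
  {f | IsHomZ (Cnk n k) f ∧ f (0, ⟨0, hk⟩) = 0}

/-- The `i`-layer is constant in `f`. -/
def LayerConst {n k : ℕ} (f : ZMod n × Fin k → ℤ) (i : ZMod n) : Prop :=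
  ∀ s t, f (i, s) = f (i, t)

/-- `NC(f)`: the set of non-constant layers of `f`. -/
def NCset {n k : ℕ} (f : ZMod n × Fin k → ℤ) : Set (ZMod n) :=
  {i | ¬ LayerConst f i}

/-- `H⁰_{n,k}`: homomorphisms in `H_{n,k}` mapping the whole `0`-layer to `0`. -/
def H0nk (n k : ℕ) (hk : 0 < k) : Set (ZMod n × Fin k → ℤ) :=
  {f | f ∈ Hnk n k hk ∧ ∀ s, f (0, s) = 0}

/-- The range size `R(f)`: the number of distinct values taken by `f`. -/
noncomputable def rngZ {V : Type} (f : V → ℤ) : ℕ := (Set.range f).ncard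

/-!
Two distinct values `a ≠ b` on the `i`-layer force every vertex adjacent to that layer, i.e. every
vertex of the layers `i ± 1`, to take a value at distance one from both, and the only such
integer is the midpoint `(a + b) / 2`.
-/

theorem Int.two_mul_eq_add_of_abs_sub_eq_one {a b v : ℤ} (hab : a ≠ b)
    (hav : |a - v| = 1) (hbv : |b - v| = 1) : 2 * v = a + b := by
  rw [abs_eq zero_le_one] at hav hbv
  omega

section

variable {n k : ℕ}

theorem Cnk_adj_add_one (hn : n ≠ 1) (j : ZMod n) (s t : Fin k) :
    (Cnk n k).Adj (j, s) (j + 1, t) := by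
  have : Nontrivial (ZMod n) := ZMod.nontrivial_iff.mpr hn
  exact ⟨fun h => one_ne_zero (left_eq_add.mp (congrArg Prod.fst h)), Or.inl rfl⟩

variable {f : ZMod n × Fin k → ℤ}

theorem IsHomZ.abs_sub_add_one (hf : IsHomZ (Cnk n k) f) (hn : n ≠ 1) (j : ZMod n)
    (s t : Fin k) : |f (j, s) - f (j + 1, t)| = 1 :=
  hf _ _ (Cnk_adj_add_one hn j s t)

theorem IsHomZ.two_mul_add_one_eq (hf : IsHomZ (Cnk n k) f) (hn : n ≠ 1) {i : ZMod n}
    {s t : Fin k} (hst : f (i, s) ≠ f (i, t)) (u : Fin k) :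
    2 * f (i + 1, u) = f (i, s) + f (i, t) :=
  Int.two_mul_eq_add_of_abs_sub_eq_one hst (hf.abs_sub_add_one hn i s u)
    (hf.abs_sub_add_one hn i t u)

theorem IsHomZ.two_mul_sub_one_eq (hf : IsHomZ (Cnk n k) f) (hn : n ≠ 1) {i : ZMod n}
    {s t : Fin k} (hst : f (i, s) ≠ f (i, t)) (u : Fin k) :
    2 * f (i - 1, u) = f (i, s) + f (i, t) := by
  have hs := hf.abs_sub_add_one hn (i - 1) u s
  have ht := hf.abs_sub_add_one hn (i - 1) u t
  rw [sub_add_cancel, abs_sub_comm] at hs ht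
  exact Int.two_mul_eq_add_of_abs_sub_eq_one hst hs ht

end

theorem stmt7_general (n k : ℕ) (hn : 4 ≤ n) (hk : 0 < k)
    (f : ZMod n × Fin k → ℤ) (hf : f ∈ Hnk n k hk)
    (i : ZMod n) (hi : ¬ LayerConst f i) :
    ∃ z : ℤ, (∀ s, f (i + 1, s) = z) ∧ (∀ s, f (i - 1, s) = z) := by
  have hn1 : n ≠ 1 := by omega
  simp only [LayerConst, not_forall] at hi
  obtain ⟨s, t, hst⟩ := hi
  have hnext := hf.1.two_mul_add_one_eq hn1 hst
  have hprev := hf.1.two_mul_sub_one_eq hn1 hst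
  refine ⟨f (i + 1, s), fun u => ?_, fun u => ?_⟩
  · linarith [hnext u, hnext s]
  · linarith [hprev u, hnext s]

theorem stmt7 (n k : ℕ) (hn : 4 ≤ n) (hne : Even n) (hk : 0 < k)
    (f : ZMod n × Fin k → ℤ) (hf : f ∈ Hnk n k hk)
    (i : ZMod n) (hi : ¬ LayerConst f i) :
    ∃ z : ℤ, (∀ s, f (i + 1, s) = z) ∧ (∀ s, f (i - 1, s) = z) :=
  stmt7_general n k hn hk f hf i hi
end

section
/- Let n ≥ 4 be even, k ∈ ℕ, and let I = {i₁ < i₂ < ⋯ < i_ℓ} ⊆ [n−1] be a set of size ℓ containing no two consecutive integers (for all i ∈ [n−2], either i ∉ I or i+1 ∉ I). Then there exists a bijection φ = (φ¹, φ²) between H(I,n) and P(n−2ℓ) × (V_k)^ℓ such that for every f ∈ H(I,n), RC(f) = Rng(φ¹(f)). -/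
open Filter

/-- `P(m)`: paths of length `m` on `ℤ` starting and ending at `0`. -/
def pathSet (m : ℕ) : Set (Fin (m + 1) → ℤ) :=
  {S | S 0 = 0 ∧ S (Fin.last m) = 0 ∧ ∀ i : Fin m, |S i.succ - S i.castSucc| = 1}

/-- `V_k = {1,-1}^k \ {(1,…,1), (-1,…,-1)}`. -/
def Vset (k : ℕ) : Set (Fin k → ℤ) :=
  {v | (∀ s, v s = 1 ∨ v s = -1) ∧ v ≠ (fun _ => 1) ∧ v ≠ (fun _ => -1)}

/-- `H(I,n)`: the homomorphisms in `H⁰_{n,k}` whose set of non-constant layers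
is exactly `I ⊆ [n-1]` (viewed inside `ℤ_n`). -/
def HIset (n k : ℕ) (hk : 0 < k) (I : Finset ℕ) : Set (ZMod n × Fin k → ℤ) :=
  {f | f ∈ H0nk n k hk ∧ NCset f = (fun j : ℕ => (j : ZMod n)) '' (I : Set ℕ)}

/-- `RC(f)`: the set of values taken by `f` on its constant layers. -/
def RCset {n k : ℕ} (hk : 0 < k) (f : ZMod n × Fin k → ℤ) : Set ℤ :=
  {z | ∃ i : ZMod n, LayerConst f i ∧ f (i, ⟨0, hk⟩) = z}

/-!
Layers in `I` are isolated, so a non-constant layer `a` lies between two constant layers; since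
it takes two distinct values, both neighbours carry the same value `c` and layer `a` takes values
in `{c - 1, c + 1}`. Deleting the two steps `a - 1 → a → a + 1` for every `a ∈ I` contracts the
walk of layer values around the cycle to a closed walk of length `n - 2ℓ` through exactly the
values of the constant layers, and `f` is recovered from this walk together with the sign vectors
`f (a, ·) - c ∈ V_k`.
-/

namespace CycleHom

open Finset Fin.NatCast

/-- The step `j → j + 1` of the cycle survives the contraction of the non-constant layers `I`. -/
def KeptStep (I : Finset ℕ) (j : ℕ) : Prop := j ∉ I ∧ j + 1 ∉ I

instance (I : Finset ℕ) : DecidablePred (KeptStep I) :=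
  fun j => inferInstanceAs (Decidable (j ∉ I ∧ j + 1 ∉ I))

/-- The layer `i` lies at position `rank I i` of the contracted walk. -/
def rank (I : Finset ℕ) (i : ℕ) : ℕ := Nat.count (KeptStep I) i

/-- The first layer at position `j` of the contracted walk. -/
noncomputable def pathPos (I : Finset ℕ) : ℕ → ℕ
  | 0 => 0
  | j + 1 => Nat.nth (KeptStep I) j + 1

variable {I : Finset ℕ} {i j n : ℕ}

lemma pos_of_mem (hI : I ⊆ Icc 1 (n - 1)) {a : ℕ} (ha : a ∈ I) : 0 < a :=
  (mem_Icc.1 (hI ha)).1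

lemma lt_of_mem (hI : I ⊆ Icc 1 (n - 1)) {a : ℕ} (ha : a ∈ I) : a < n := by
  have := mem_Icc.1 (hI ha); omega

lemma zero_notMem (hI : I ⊆ Icc 1 (n - 1)) : 0 ∉ I := fun h => (pos_of_mem hI h).false

lemma self_notMem (hI : I ⊆ Icc 1 (n - 1)) : n ∉ I := fun h => (lt_of_mem hI h).false

lemma sub_one_notMem (hcons : ∀ a ∈ I, a + 1 ∉ I) {a : ℕ} (ha : a ∈ I) (hpos : 0 < a) :
    a - 1 ∉ I :=
  fun h => hcons _ h (by rwa [Nat.sub_add_cancel hpos])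

lemma rank_zero : rank I 0 = 0 := Nat.count_zero _

lemma rank_mono : Monotone (rank I) := Nat.count_monotone _

lemma rank_succ_of_mem (h : i ∈ I) : rank I (i + 1) = rank I i := by
  simp [rank, Nat.count_succ, KeptStep, h]

lemma rank_succ_of_succ_mem (h : i + 1 ∈ I) : rank I (i + 1) = rank I i := by
  simp [rank, Nat.count_succ, KeptStep, h]

lemma rank_succ_of_keptStep (h : KeptStep I i) : rank I (i + 1) = rank I i + 1 := by
  simp [rank, Nat.count_succ, h]

lemma rank_add_count_add_count (hcons : ∀ a ∈ I, a + 1 ∉ I) (i : ℕ) :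
    rank I i + Nat.count (· ∈ I) i + Nat.count (· + 1 ∈ I) i = i := by
  induction i with
  | zero => simp [rank_zero]
  | succ i ih =>
    have := hcons i
    simp only [rank, Nat.count_succ, KeptStep] at ih ⊢
    split_ifs <;> grind

lemma count_mem_eq_card (h : I ⊆ range n) : Nat.count (· ∈ I) n = #I := by
  rw [Nat.count_eq_card_filter_range, filter_mem_eq_inter, inter_eq_right.2 h]

lemma rank_eq_sub (hI : I ⊆ Icc 1 (n - 1)) (hcons : ∀ a ∈ I, a + 1 ∉ I) :
    rank I n = n - 2 * #I := by
  have hn : I ⊆ range n := fun a ha => mem_range.2 (lt_of_mem hI ha)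
  have hn' : I ⊆ range (n + 1) := hn.trans (range_subset_range.2 n.le_succ)
  have hshift := Nat.count_succ' (· ∈ I) n
  rw [count_mem_eq_card hn', if_neg (zero_notMem hI)] at hshift
  have := rank_add_count_add_count hcons n
  rw [count_mem_eq_card hn] at this
  omega

lemma infinite_keptStep : (Set.ofPred (KeptStep I)).Infinite := by
  refine Set.infinite_of_forall_exists_gt fun a => ⟨a + I.sup id + 1, ?_, by omega⟩
  have hgt : ∀ b, I.sup id < b → b ∉ I := fun b hb hbI =>
    absurd (le_sup (f := id) hbI) (not_le.2 hb)
  exact ⟨hgt _ (by omega), hgt _ (by omega)⟩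

lemma keptStep_nth (j : ℕ) : KeptStep I (Nat.nth (KeptStep I) j) :=
  Nat.nth_mem_of_infinite infinite_keptStep j

lemma rank_nth (j : ℕ) : rank I (Nat.nth (KeptStep I) j) = j :=
  Nat.count_nth_of_infinite infinite_keptStep j

lemma rank_pathPos (j : ℕ) : rank I (pathPos I j) = j := by
  cases j with
  | zero => exact rank_zero
  | succ j => rw [pathPos, rank_succ_of_keptStep (keptStep_nth j), rank_nth]

lemma pathPos_notMem (h0 : 0 ∉ I) (j : ℕ) : pathPos I j ∉ I := by
  cases j with
  | zero => exact h0
  | succ j => exact (keptStep_nth j).2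

lemma pathPos_rank_succ (h : KeptStep I i) : pathPos I (rank I (i + 1)) = i + 1 := by
  rw [rank_succ_of_keptStep h, pathPos, rank, Nat.nth_count h]

lemma nth_lt_of_lt_rank (hj : j < rank I n) : Nat.nth (KeptStep I) j < n :=
  Nat.nth_lt_of_lt_count hj

lemma pathPos_le (hj : j ≤ rank I n) : pathPos I j ≤ n := by
  cases j with
  | zero => exact n.zero_le
  | succ j => exact nth_lt_of_lt_rank hj

lemma pathPos_val_le {m : ℕ} (hm : rank I n = m) (j : Fin (m + 1)) : pathPos I j ≤ n :=
  pathPos_le (by rw [hm]; exact Nat.lt_succ_iff.1 j.2)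

lemma eq_of_abs_sub_eq_one {a b x y : ℤ} (hab : a ≠ b) (hxa : |a - x| = 1) (hxb : |b - x| = 1)
    (hya : |y - a| = 1) (hyb : |y - b| = 1) : x = y := by
  rw [abs_eq zero_le_one] at hxa hxb hya hyb
  omega

section Layers

variable {ι : Type*} {F : ℕ → ι → ℤ}

lemma layer_eq_of_not_const_succ (hstep : ∀ i s t, |F (i + 1) t - F i s| = 1)
    (hnc : ∃ s t, F (i + 1) s ≠ F (i + 1) t) (s t : ι) : F i s = F (i + 2) t := by
  obtain ⟨s₁, s₂, hne⟩ := hnc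
  exact eq_of_abs_sub_eq_one hne (hstep i s s₁) (hstep i s s₂) (hstep (i + 1) s₁ t)
    (hstep (i + 1) s₂ t)

lemma layer_eq_pathPos (hstep : ∀ i s t, |F (i + 1) t - F i s| = 1)
    (hconst : ∀ i ≤ n, i ∉ I → ∀ s t, F i s = F i t) (hnc : ∀ a ∈ I, ∃ s t, F a s ≠ F a t)
    (h0 : 0 ∉ I) (hcons : ∀ a ∈ I, a + 1 ∉ I) :
    ∀ i ≤ n, i ∉ I → ∀ s t, F i s = F (pathPos I (rank I i)) t := by
  intro i
  induction i using Nat.strong_induction_on with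
  | _ i ih =>
    intro hin hiI s t
    match i with
    | 0 => exact hconst 0 hin hiI s t
    | i + 1 =>
      by_cases hi : i ∈ I
      · obtain ⟨i, rfl⟩ : ∃ i', i = i' + 1 := Nat.exists_eq_succ_of_ne_zero
          (ne_of_mem_of_not_mem hi h0)
        have hiI' : i ∉ I := fun h => hcons i h hi
        rw [rank_succ_of_mem hi, rank_succ_of_succ_mem hi,
          ← layer_eq_of_not_const_succ hstep (hnc _ hi) s s]
        exact ih i (by omega) (by omega) hiI' s t
      · have hkept : KeptStep I i := ⟨hi, hiI⟩
        rw [pathPos_rank_succ hkept]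
        exact hconst _ hin hiI s t

end Layers

variable {k : ℕ} {f : ZMod n × Fin k → ℤ}

lemma isHomZ_Cnk_iff [Fact (1 < n)] :
    IsHomZ (Cnk n k) f ↔ ∀ i s t, |f (i + 1, t) - f (i, s)| = 1 := by
  constructor
  · intro hf i s t
    rw [abs_sub_comm]
    refine hf _ _ ((SimpleGraph.fromRel_adj _ _ _).2 ⟨fun h => ?_, Or.inl rfl⟩)
    simpa using congrArg Prod.fst h
  · rintro hf ⟨i, s⟩ ⟨j, t⟩ hadj
    obtain ⟨-, h | h⟩ := (SimpleGraph.fromRel_adj _ _ _).1 hadj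
    · obtain rfl : i + 1 = j := h
      rw [abs_sub_comm]
      exact hf i s t
    · obtain rfl : j + 1 = i := h
      exact hf j t s

lemma val_natCast_notMem [NeZero n] (h0 : 0 ∉ I) (hi : i ≤ n) (hiI : i ∉ I) :
    (i : ZMod n).val ∉ I := by
  rcases hi.lt_or_eq with hi | rfl
  · rwa [ZMod.val_natCast_of_lt hi]
  · rwa [ZMod.natCast_self, ZMod.val_zero]

lemma mem_HIset_iff [Fact (1 < n)] (hk : 0 < k) (hI : I ⊆ Icc 1 (n - 1)) :
    f ∈ HIset n k hk I ↔ (∀ i s t, |f (i + 1, t) - f (i, s)| = 1) ∧ (∀ s, f (0, s) = 0) ∧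
      ∀ i : ZMod n, LayerConst f i ↔ i.val ∉ I := by
  have himage : ∀ i : ZMod n, i ∈ (fun j : ℕ => (j : ZMod n)) '' (I : Set ℕ) ↔ i.val ∈ I :=
    fun i => ⟨by rintro ⟨j, hj, rfl⟩; rwa [ZMod.val_natCast_of_lt (lt_of_mem hI hj)],
      fun h => ⟨i.val, h, ZMod.natCast_zmod_val i⟩⟩
  simp only [HIset, H0nk, Hnk, Set.mem_ofPred_eq, isHomZ_Cnk_iff, Set.ext_iff, NCset, himage]
  exact ⟨fun ⟨⟨⟨hstep, _⟩, h0⟩, hc⟩ => ⟨hstep, h0, fun i => (hc i).not_right⟩,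
    fun ⟨hstep, h0, hc⟩ => ⟨⟨⟨hstep, h0 _⟩, h0⟩, fun i => (hc i).not_left⟩⟩

lemma apply_natCast_eq_pathPos [Fact (1 < n)] {hk : 0 < k} (hI : I ⊆ Icc 1 (n - 1))
    (hcons : ∀ a ∈ I, a + 1 ∉ I) (hf : f ∈ HIset n k hk I) (hi : i ≤ n) (hiI : i ∉ I)
    (s t : Fin k) : f (i, s) = f (pathPos I (rank I i), t) := by
  obtain ⟨hstep, -, hconst⟩ := (mem_HIset_iff hk hI).1 hf
  have h0 := zero_notMem hI
  refine layer_eq_pathPos (F := fun i s => f (i, s)) (fun i s t => ?_)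
    (fun i hi hiI => (hconst _).2 (val_natCast_notMem h0 hi hiI)) (fun a ha => ?_) h0 hcons
    i hi hiI s t
  · simpa using hstep i s t
  · have := (hconst a).not.2 (by rwa [ZMod.val_natCast_of_lt (lt_of_mem hI ha), not_not])
    simpa [LayerConst] using this

lemma mem_Vset_iff {v : Fin k → ℤ} :
    v ∈ Vset k ↔ (∀ s, |v s| = 1) ∧ ∃ s t, v s ≠ v t := by
  simp only [Vset, Set.mem_ofPred_eq, abs_eq zero_le_one, ne_eq, funext_iff, not_forall]
  constructor
  · rintro ⟨hv, ⟨s, hs⟩, ⟨t, ht⟩⟩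
    exact ⟨hv, s, t, by grind⟩
  · rintro ⟨hv, s, t, hst⟩
    exact ⟨hv, by grind⟩

lemma pathSet_step {m j : ℕ} {S : Fin (m + 1) → ℤ} (hS : S ∈ pathSet m) (hj : j < m) :
    |S ((j + 1 : ℕ) : Fin (m + 1)) - S j| = 1 := by
  have h := hS.2.2 ⟨j, hj⟩
  rwa [Fin.succ_mk, Fin.castSucc_mk, ← Fin.cast_val_eq_self ⟨j + 1, _⟩,
    ← Fin.cast_val_eq_self ⟨j, _⟩] at h

section Data

variable {ℓ m : ℕ} {e : Fin ℓ ≃ I} {S : Fin (m + 1) → ℤ} {w : Fin ℓ → Fin k → ℤ} {p : ℕ}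
  {s₀ : Fin k}

variable (I m) in
noncomputable def reducedPath (s₀ : Fin k) (f : ZMod n × Fin k → ℤ) : Fin (m + 1) → ℤ :=
  fun j => f (pathPos I j, s₀)

variable (e) in
def layerSigns (s₀ : Fin k) (f : ZMod n × Fin k → ℤ) : Fin ℓ → Fin k → ℤ :=
  fun j s => f ((e j : ℕ), s) - f (((e j : ℕ) - 1 : ℕ), s₀)

variable (e) in
/-- Inverse of `f ↦ (reducedPath f, layerSigns f)`, with the layers indexed by `ℕ`. -/
def assembleNat (S : Fin (m + 1) → ℤ) (w : Fin ℓ → Fin k → ℤ) (p : ℕ) (s : Fin k) : ℤ :=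
  if h : p ∈ I then S (rank I (p - 1)) + w (e.symm ⟨p, h⟩) s else S (rank I p)

variable (e n) in
def assemble (S : Fin (m + 1) → ℤ) (w : Fin ℓ → Fin k → ℤ) : ZMod n × Fin k → ℤ :=
  fun x => assembleNat e S w x.1.val x.2

lemma assembleNat_of_mem (h : p ∈ I) (s : Fin k) :
    assembleNat e S w p s = S (rank I (p - 1)) + w (e.symm ⟨p, h⟩) s :=
  dif_pos h

lemma assembleNat_of_notMem (h : p ∉ I) (s : Fin k) : assembleNat e S w p s = S (rank I p) :=
  dif_neg h

lemma assemble_natCast [NeZero n] (hI : I ⊆ Icc 1 (n - 1)) (hm : rank I n = m)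
    (hS : S (Fin.last m) = S 0) (hp : p ≤ n) (s : Fin k) :
    assemble n e S w (p, s) = assembleNat e S w p s := by
  rcases hp.lt_or_eq with hp | rfl
  · simp only [assemble, ZMod.val_natCast_of_lt hp]
  · have h0 := zero_notMem hI
    have hp := self_notMem hI
    simp only [assemble, ZMod.natCast_self, ZMod.val_zero]
    rw [assembleNat_of_notMem h0, assembleNat_of_notMem hp, rank_zero, hm,
      Fin.natCast_eq_last, hS, Nat.cast_zero]

lemma assembleNat_step (hm : rank I n = m) (h0 : 0 ∉ I) (hcons : ∀ a ∈ I, a + 1 ∉ I)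
    (hS : S ∈ pathSet m) (hw : ∀ j s, |w j s| = 1) (hp : p < n) (s t : Fin k) :
    |assembleNat e S w (p + 1) t - assembleNat e S w p s| = 1 := by
  by_cases hpI : p ∈ I
  · obtain ⟨p, rfl⟩ : ∃ q, p = q + 1 := Nat.exists_eq_succ_of_ne_zero
      (ne_of_mem_of_not_mem hpI h0)
    rw [assembleNat_of_notMem (hcons _ hpI), assembleNat_of_mem hpI, rank_succ_of_mem hpI,
      rank_succ_of_succ_mem hpI, Nat.add_sub_cancel, sub_add_cancel_left, abs_neg]
    exact hw _ s
  by_cases hpI' : p + 1 ∈ I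
  · rw [assembleNat_of_mem hpI', assembleNat_of_notMem hpI, Nat.add_sub_cancel,
      add_sub_cancel_left]
    exact hw _ t
  · have hkept : KeptStep I p := ⟨hpI, hpI'⟩
    rw [assembleNat_of_notMem hpI', assembleNat_of_notMem hpI, rank_succ_of_keptStep hkept]
    refine pathSet_step hS ?_
    have := rank_mono (I := I) hp
    rw [rank_succ_of_keptStep hkept] at this
    omega

lemma assemble_mem_HIset [Fact (1 < n)] (hk : 0 < k) (hI : I ⊆ Icc 1 (n - 1))
    (hcons : ∀ a ∈ I, a + 1 ∉ I) (hm : rank I n = m) (hS : S ∈ pathSet m)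
    (hw : ∀ j, w j ∈ Vset k) : assemble n e S w ∈ HIset n k hk I := by
  have h0 := zero_notMem hI
  have hSm : S (Fin.last m) = S 0 := hS.2.1.trans hS.1.symm
  refine (mem_HIset_iff hk hI).2 ⟨fun i s t => ?_, fun s => ?_, fun i => ?_⟩
  · have hi := ZMod.val_lt i
    rw [← ZMod.natCast_zmod_val i, ← Nat.cast_succ, assemble_natCast hI hm hSm hi,
      assemble_natCast hI hm hSm hi.le]
    exact assembleNat_step hm h0 hcons hS (fun j => (mem_Vset_iff.1 (hw j)).1) hi s t
  · simp only [assemble, ZMod.val_zero, assembleNat_of_notMem h0, rank_zero, Nat.cast_zero]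
    exact hS.1
  · by_cases hi : i.val ∈ I
    · obtain ⟨s, t, hst⟩ := (mem_Vset_iff.1 (hw (e.symm ⟨_, hi⟩))).2
      simp only [hi, not_true_eq_false, iff_false, LayerConst, assemble,
        assembleNat_of_mem hi, add_right_inj, not_forall]
      exact ⟨s, t, hst⟩
    · simp [hi, LayerConst, assemble, assembleNat_of_notMem hi]

lemma reducedPath_assemble [NeZero n] (hI : I ⊆ Icc 1 (n - 1)) (hm : rank I n = m)
    (hS : S (Fin.last m) = S 0) : reducedPath I m s₀ (assemble n e S w) = S := by
  have h0 := zero_notMem hI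
  funext j
  rw [reducedPath, assemble_natCast hI hm hS (pathPos_val_le hm j),
    assembleNat_of_notMem (pathPos_notMem h0 j), rank_pathPos, Fin.cast_val_eq_self]

lemma layerSigns_assemble [NeZero n] (hI : I ⊆ Icc 1 (n - 1)) (hcons : ∀ a ∈ I, a + 1 ∉ I)
    (hm : rank I n = m) (hS : S (Fin.last m) = S 0) :
    layerSigns e s₀ (assemble n e S w) = w := by
  funext j s
  have ha := (e j).2
  have hpos := pos_of_mem hI ha
  have hpred := sub_one_notMem hcons ha hpos
  rw [layerSigns, assemble_natCast hI hm hS (lt_of_mem hI ha).le,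
    assemble_natCast hI hm hS ((Nat.sub_le _ _).trans (lt_of_mem hI ha).le), assembleNat_of_mem ha,
    assembleNat_of_notMem hpred]
  simp

section Forward

variable [Fact (1 < n)] {hk : 0 < k}

lemma reducedPath_rank (hI : I ⊆ Icc 1 (n - 1)) (hcons : ∀ a ∈ I, a + 1 ∉ I)
    (hf : f ∈ HIset n k hk I) (hm : rank I n = m) (hi : i ≤ n) (hiI : i ∉ I) (s : Fin k) :
    reducedPath I m s₀ f (rank I i) = f (i, s) := by
  have hlt : rank I i < m + 1 := Nat.lt_succ_of_le (hm ▸ rank_mono hi)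
  rw [reducedPath, Fin.val_cast_of_lt hlt, apply_natCast_eq_pathPos hI hcons hf hi hiI s]

lemma assemble_reducedPath_layerSigns (hI : I ⊆ Icc 1 (n - 1)) (hcons : ∀ a ∈ I, a + 1 ∉ I)
    (hf : f ∈ HIset n k hk I) (hm : rank I n = m) :
    assemble n e (reducedPath I m s₀ f) (layerSigns e s₀ f) = f := by
  funext ⟨i, s⟩
  have hi := ZMod.val_lt i
  by_cases h : i.val ∈ I
  · have hpos := pos_of_mem hI h
    have hpred := sub_one_notMem hcons h hpos
    rw [assemble, assembleNat_of_mem h, reducedPath_rank hI hcons hf hm (by omega) hpred s₀]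
    simp [layerSigns]
  · rw [assemble, assembleNat_of_notMem h, reducedPath_rank hI hcons hf hm hi.le h s,
      ZMod.natCast_zmod_val]

lemma reducedPath_mem_pathSet (hI : I ⊆ Icc 1 (n - 1)) (hcons : ∀ a ∈ I, a + 1 ∉ I)
    (hf : f ∈ HIset n k hk I) (hm : rank I n = m) : reducedPath I m s₀ f ∈ pathSet m := by
  obtain ⟨hstep, hzero, -⟩ := (mem_HIset_iff hk hI).1 hf
  have hn := self_notMem hI
  refine ⟨by simpa [reducedPath, pathPos] using hzero s₀, ?_, fun j => ?_⟩
  · have := apply_natCast_eq_pathPos hI hcons hf le_rfl hn s₀ s₀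
    rw [ZMod.natCast_self, hzero, hm] at this
    exact this.symm
  · have hlt : Nat.nth (KeptStep I) j < n := nth_lt_of_lt_rank (hm ▸ j.2)
    have hprev := apply_natCast_eq_pathPos hI hcons hf hlt.le (keptStep_nth j).1 s₀ s₀
    rw [rank_nth] at hprev
    have hsucc :
        reducedPath I m s₀ f j.succ = f ((Nat.nth (KeptStep I) j : ZMod n) + 1, s₀) := by
      simp [reducedPath, pathPos]
    rw [hsucc, reducedPath, Fin.val_castSucc, ← hprev]
    exact hstep _ s₀ s₀

lemma layerSigns_mem_Vset (hI : I ⊆ Icc 1 (n - 1)) (hf : f ∈ HIset n k hk I) (j : Fin ℓ) :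
    layerSigns e s₀ f j ∈ Vset k := by
  obtain ⟨hstep, -, hconst⟩ := (mem_HIset_iff hk hI).1 hf
  have ha := (e j).2
  have hpos := pos_of_mem hI ha
  have hcast : ((e j : ℕ) : ZMod n) = (((e j : ℕ) - 1 : ℕ) : ZMod n) + 1 := by
    rw [← Nat.cast_add_one, Nat.sub_add_cancel hpos]
  have hnc : ¬ LayerConst f (e j : ℕ) := by
    rw [hconst, ZMod.val_natCast_of_lt (lt_of_mem hI ha), not_not]
    exact ha
  simp only [LayerConst, not_forall] at hnc
  obtain ⟨s, t, hst⟩ := hnc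
  refine mem_Vset_iff.2 ⟨fun s => ?_, s, t, fun h => hst (by simpa [layerSigns] using h)⟩
  rw [layerSigns, hcast]
  exact hstep _ _ _

lemma RCset_eq_range_reducedPath (hI : I ⊆ Icc 1 (n - 1)) (hcons : ∀ a ∈ I, a + 1 ∉ I)
    (hf : f ∈ HIset n k hk I) (hm : rank I n = m) :
    RCset hk f = Set.range (reducedPath I m s₀ f) := by
  obtain ⟨-, -, hconst⟩ := (mem_HIset_iff hk hI).1 hf
  have h0 := zero_notMem hI
  ext z
  constructor
  · rintro ⟨i, hi, rfl⟩
    refine ⟨rank I i.val, ?_⟩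
    rw [reducedPath_rank hI hcons hf hm (ZMod.val_lt i).le ((hconst i).1 hi),
      ZMod.natCast_zmod_val]
  · rintro ⟨j, rfl⟩
    have hc := (hconst _).2 (val_natCast_notMem h0 (pathPos_val_le hm j) (pathPos_notMem h0 j))
    exact ⟨_, hc, hc _ _⟩

end Forward

end Data

end CycleHom

open CycleHom in
theorem stmt10_general (n k : ℕ) (hn : 4 ≤ n) (hk : 0 < k)
    (I : Finset ℕ) (ℓ : ℕ) (hℓ : I.card = ℓ)
    (hI : I ⊆ Finset.Icc 1 (n - 1)) (hcons : ∀ i ∈ I, i + 1 ∉ I) :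
    ∃ φ : (ZMod n × Fin k → ℤ) → (Fin (n - 2 * ℓ + 1) → ℤ) × (Fin ℓ → Fin k → ℤ),
      Set.BijOn φ (HIset n k hk I)
        ((pathSet (n - 2 * ℓ)) ×ˢ {w : Fin ℓ → Fin k → ℤ | ∀ j, w j ∈ Vset k}) ∧
      ∀ f ∈ HIset n k hk I, RCset hk f = Set.range (φ f).1 := by
  have : Fact (1 < n) := ⟨by omega⟩
  have hm : rank I n = n - 2 * ℓ := hℓ ▸ rank_eq_sub hI hcons
  let e : Fin ℓ ≃ I := (I.equivFinOfCardEq hℓ).symm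
  let s₀ : Fin k := ⟨0, hk⟩
  refine ⟨fun f => (reducedPath I (n - 2 * ℓ) s₀ f, layerSigns e s₀ f),
    Set.InvOn.bijOn (f' := fun P => assemble n e P.1 P.2) ⟨?_, ?_⟩ ?_ ?_,
    fun f hf => RCset_eq_range_reducedPath hI hcons hf hm⟩
  · exact fun f hf => assemble_reducedPath_layerSigns hI hcons hf hm
  · rintro ⟨S, w⟩ ⟨hS, -⟩
    have hSm : S (Fin.last _) = S 0 := hS.2.1.trans hS.1.symm
    exact Prod.ext (reducedPath_assemble hI hm hSm) (layerSigns_assemble hI hcons hm hSm)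
  · exact fun f hf => ⟨reducedPath_mem_pathSet hI hcons hf hm, layerSigns_mem_Vset hI hf⟩
  · rintro ⟨S, w⟩ ⟨hS, hw⟩
    exact assemble_mem_HIset hk hI hcons hm hS hw

theorem stmt10 (n k : ℕ) (hn : 4 ≤ n) (hne : Even n) (hk : 0 < k)
    (I : Finset ℕ) (ℓ : ℕ) (hℓ : I.card = ℓ)
    (hI : I ⊆ Finset.Icc 1 (n - 1)) (hcons : ∀ i ∈ I, i + 1 ∉ I) :
    ∃ φ : (ZMod n × Fin k → ℤ) → (Fin (n - 2 * ℓ + 1) → ℤ) × (Fin ℓ → Fin k → ℤ),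
      Set.BijOn φ (HIset n k hk I)
        ((pathSet (n - 2 * ℓ)) ×ˢ {w : Fin ℓ → Fin k → ℤ | ∀ j, w j ∈ Vset k}) ∧
      ∀ f ∈ HIset n k hk I, RCset hk f = Set.range (φ f).1 :=
  stmt10_general n k hn hk I ℓ hℓ hI hcons
end

section
/- Let n ≥ 4 be even, k ∈ ℕ, and let I = {i₁ < ⋯ < i_ℓ} ⊆ [n−1] be a set of size ℓ ≥ 1 containing no two consecutive integers. For f ∈ H(I,n) define f′ on ℤ_{n−2} × [k] by f′(i,s) = f(i,s) for i < i_ℓ and f′(i,s) = f(i+2,s) for i ≥ i_ℓ (indices of f read modulo n), and define v_f ∈ {1,−1}^k by v_f(s) = f(i_ℓ,s) − f(i_ℓ−1,s). Then f′ ∈ H(I \ {i_ℓ}, n−2), v_f ∈ V_k, and the map Φ(f) = (f′, v_f) is a bijection from H(I,n) to H(I \ {i_ℓ}, n−2) × V_k. -/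
open Filter

/-- The map `f ↦ f′` deleting the (top non-constant) layer `m` and the layer
after it: `f′(i,s) = f(i,s)` for `i < m` and `f′(i,s) = f(i+2,s)` for `i ≥ m`
(indices read modulo `n`). -/
def fprime (n k : ℕ) (m : ℕ) (f : ZMod n × Fin k → ℤ) :
    ZMod (n - 2) × Fin k → ℤ :=
  fun p =>
    if p.1.val < m then f (((p.1.val : ℕ) : ZMod n), p.2)
    else f (((p.1.val + 2 : ℕ) : ZMod n), p.2)

/-- The vector `v_f ∈ {1,-1}^k`, `v_f(s) = f(i_ℓ,s) − f(i_ℓ−1,s)`. -/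
def vf (n k : ℕ) (m : ℕ) (f : ZMod n × Fin k → ℤ) : Fin k → ℤ :=
  fun s => f ((m : ZMod n), s) - f (((m - 1 : ℕ) : ZMod n), s)

/-!
A non-constant layer forces both neighbouring layers to take one common constant value: two
distinct integers at distance one from both `a` and `b` force `a = b`. So for `m = max I` the
layers `m - 1` and `m + 1` of `f` agree, and deleting layers `m`, `m + 1` glues layer `m - 1` to
layer `m + 2` without breaking the homomorphism property, while `v_f` records the deleted layer
`m`. The inverse collapses the indices `m`, `m + 1` onto `m - 1` and adds `v` back on layer `m`;
since `m - 1 ∉ I`, layer `m - 1` of `g` is constant, so layer `m` is non-constant exactly because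
`v` is.
-/

lemma eq_of_abs_sub_eq_one {a b x y : ℤ} (hxy : x ≠ y) (hxa : |x - a| = 1)
    (hya : |y - a| = 1) (hxb : |x - b| = 1) (hyb : |y - b| = 1) : a = b := by
  rw [abs_eq zero_le_one] at hxa hya hxb hyb
  omega

lemma mem_Vset_iff {k : ℕ} (hk : 0 < k) {v : Fin k → ℤ} :
    v ∈ Vset k ↔ (∀ s, v s = 1 ∨ v s = -1) ∧ ∃ s t, v s ≠ v t := by
  refine ⟨fun ⟨hv, h1, h2⟩ => ⟨hv, ?_⟩, fun ⟨hv, s, t, hst⟩ => ⟨hv, ?_, ?_⟩⟩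
  · by_contra! hconst
    rcases hv ⟨0, hk⟩ with h | h
    · exact h1 (funext fun t => (hconst t ⟨0, hk⟩).trans h)
    · exact h2 (funext fun t => (hconst t ⟨0, hk⟩).trans h)
  all_goals rintro rfl; exact hst rfl

section Homomorphisms

variable {N k : ℕ} {hk : 0 < k} {J : Finset ℕ} {h : ZMod N × Fin k → ℤ}

lemma isHomZ_Cnk_iff (hN : 2 ≤ N) :
    IsHomZ (Cnk N k) h ↔
      ∀ i < N, ∀ s t, |h (((i + 1 : ℕ) : ZMod N), t) - h ((i : ZMod N), s)| = 1 := by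
  have : NeZero N := ⟨by omega⟩
  constructor
  · intro hh i hi s t
    rw [abs_sub_comm]
    refine hh _ _ ((SimpleGraph.fromRel_adj _ _ _).2 ⟨fun heq => ?_, Or.inl (by push_cast; rfl)⟩)
    have h1 : ((1 : ℕ) : ZMod N) = ((0 : ℕ) : ZMod N) := by
      simpa using congrArg Prod.fst heq
    rw [ZMod.natCast_eq_natCast_iff', Nat.mod_eq_of_lt (by omega : 1 < N), Nat.zero_mod] at h1
    omega
  · have hstep (a b : ZMod N × Fin k) (hab : a.1 + 1 = b.1)
        (H : ∀ i < N, ∀ s t, |h (((i + 1 : ℕ) : ZMod N), t) - h ((i : ZMod N), s)| = 1) :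
        |h b - h a| = 1 := by
      obtain ⟨x, s⟩ := a
      obtain ⟨y, t⟩ := b
      subst hab
      simpa only [Nat.cast_succ, ZMod.natCast_zmod_val] using H x.val (ZMod.val_lt x) s t
    intro H a b hab
    rcases ((SimpleGraph.fromRel_adj _ _ _).1 hab).2 with hab | hab
    · rw [abs_sub_comm]; exact hstep a b hab H
    · exact hstep b a hab H

lemma IsHomZ.eq_of_not_layerConst (hN : 2 ≤ N) (hh : IsHomZ (Cnk N k) h) {i : ℕ}
    (hi : i + 1 < N) (hnc : ¬ LayerConst h ((i + 1 : ℕ) : ZMod N)) (s t : Fin k) :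
    h ((i : ZMod N), s) = h (((i + 2 : ℕ) : ZMod N), t) := by
  obtain ⟨a, b, hab⟩ : ∃ a b, h (((i + 1 : ℕ) : ZMod N), a) ≠ h (((i + 1 : ℕ) : ZMod N), b) := by
    simpa [LayerConst] using hnc
  have hstep := (isHomZ_Cnk_iff hN).1 hh
  refine eq_of_abs_sub_eq_one hab (hstep i (by omega) s a) (hstep i (by omega) s b) ?_ ?_ <;>
    rw [abs_sub_comm] <;> exact hstep (i + 1) hi _ t

lemma layerConst_natCast_iff (hJ : J ⊆ Finset.range N) (hh : h ∈ HIset N k hk J) {j : ℕ}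
    (hj : j ≤ N) : LayerConst h (j : ZMod N) ↔ j ∉ J := by
  rcases hj.lt_or_eq with hj | rfl
  · have hNC := congrArg (((j : ℕ) : ZMod N) ∈ ·) hh.2
    simp only [NCset, Set.mem_ofPred_eq, Set.mem_image, Finset.mem_coe, eq_iff_iff] at hNC
    rw [← not_iff_not, not_not, hNC]
    constructor
    · rintro ⟨i, hi, hij⟩
      rw [ZMod.natCast_eq_natCast_iff', Nat.mod_eq_of_lt hj,
        Nat.mod_eq_of_lt (Finset.mem_range.1 (hJ hi))] at hij
      exact hij ▸ hi
    · exact fun hjJ => ⟨j, hjJ, rfl⟩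
  · refine iff_of_true (fun s t => ?_) (fun hN => by simpa using hJ hN)
    rw [ZMod.natCast_self, hh.1.2 s, hh.1.2 t]

lemma mem_HIset_of [NeZero N] (hJ : J ⊆ Finset.range N) (hhom : IsHomZ (Cnk N k) h)
    (hzero : ∀ s, h (0, s) = 0) (hNC : ∀ j < N, LayerConst h (j : ZMod N) ↔ j ∉ J) :
    h ∈ HIset N k hk J := by
  refine ⟨⟨⟨hhom, hzero _⟩, hzero⟩, Set.ext fun x => ?_⟩
  have hx := hNC x.val (ZMod.val_lt x)
  rw [ZMod.natCast_zmod_val] at hx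
  simp only [NCset, Set.mem_ofPred_eq, hx, not_not, Set.mem_image, Finset.mem_coe]
  constructor
  · exact fun hxJ => ⟨x.val, hxJ, ZMod.natCast_zmod_val x⟩
  · rintro ⟨i, hi, rfl⟩
    rwa [ZMod.val_cast_of_lt (Finset.mem_range.1 (hJ hi))]

end Homomorphisms

def skipIdx (m j : ℕ) : ℕ := if j < m then j else j + 2

def collapseIdx (m j : ℕ) : ℕ := if j < m then j else if j ≤ m + 1 then m - 1 else j - 2

section Index

variable {m j : ℕ} {I : Finset ℕ}

lemma skipIdx_succ (h : j + 1 ≠ m) : skipIdx m (j + 1) = skipIdx m j + 1 := by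
  unfold skipIdx; split_ifs <;> omega

lemma collapseIdx_succ (hm_pos : 0 < m) (h₁ : j + 1 ≠ m) (h₂ : j ≠ m) :
    collapseIdx m (j + 1) = collapseIdx m j + 1 := by
  unfold collapseIdx; split_ifs <;> omega

lemma skipIdx_lt {n : ℕ} (hj : j < n - 2) : skipIdx m j < n := by
  unfold skipIdx; split_ifs <;> omega

lemma collapseIdx_le {n : ℕ} (hmn : m < n) (hj : j ≤ n) : collapseIdx m j ≤ n - 2 := by
  unfold collapseIdx; split_ifs <;> omega

lemma collapseIdx_skipIdx : collapseIdx m (skipIdx m j) = j := by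
  unfold collapseIdx skipIdx; split_ifs <;> omega

lemma skipIdx_collapseIdx (h₁ : j ≠ m) (h₂ : j ≠ m + 1) : skipIdx m (collapseIdx m j) = j := by
  unfold collapseIdx skipIdx; split_ifs <;> omega

lemma lt_of_mem_erase_of_isGreatest (hm : IsGreatest (I : Set ℕ) m) (hj : j ∈ I.erase m) :
    j < m :=
  lt_of_le_of_ne (hm.2 (Finset.mem_of_mem_erase hj)) (Finset.ne_of_mem_erase hj)

lemma skipIdx_mem_iff (hm : IsGreatest (I : Set ℕ) m) : skipIdx m j ∈ I ↔ j ∈ I.erase m := by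
  unfold skipIdx
  split_ifs with h
  · rw [Finset.mem_erase, and_iff_right (by omega)]
  · refine iff_of_false (fun hj => ?_) (fun hj => ?_)
    · have := hm.2 hj; omega
    · have := lt_of_mem_erase_of_isGreatest hm hj; omega

lemma collapseIdx_mem_erase_iff (hm : IsGreatest (I : Set ℕ) m) (hm1 : m - 1 ∉ I) (hj : j ≠ m) :
    collapseIdx m j ∈ I.erase m ↔ j ∈ I := by
  unfold collapseIdx
  split_ifs with h₁ h₂
  · rw [Finset.mem_erase, and_iff_right hj]
  · refine iff_of_false (fun h => hm1 (Finset.mem_of_mem_erase h)) (fun hjI => ?_)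
    have := hm.2 hjI; omega
  · refine iff_of_false (fun h => ?_) (fun hjI => ?_)
    · have := lt_of_mem_erase_of_isGreatest hm h; omega
    · have := hm.2 hjI; omega

end Index

def fprimeInv (n k m : ℕ) (g : ZMod (n - 2) × Fin k → ℤ) (v : Fin k → ℤ) :
    ZMod n × Fin k → ℤ :=
  fun p => g ((collapseIdx m p.1.val : ZMod (n - 2)), p.2) + if p.1.val = m then v p.2 else 0

section Evaluation

variable {n k m : ℕ} {f : ZMod n × Fin k → ℤ} {g : ZMod (n - 2) × Fin k → ℤ} {v : Fin k → ℤ}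

lemma fprime_apply (x : ZMod (n - 2)) (s : Fin k) :
    fprime n k m f (x, s) = f ((skipIdx m x.val : ZMod n), s) := by
  unfold fprime skipIdx; split_ifs <;> rfl

lemma fprime_natCast (hm_pos : 0 < m) (hmn : m < n)
    (hf : ∀ s, f (((m - 1 : ℕ) : ZMod n), s) = f (((m + 1 : ℕ) : ZMod n), s))
    {i : ℕ} (hi : i ≤ n - 2) (s : Fin k) :
    fprime n k m f ((i : ZMod (n - 2)), s) = f ((skipIdx m i : ZMod n), s) := by
  rw [fprime_apply]
  -- `i = n - 2` wraps around to `0`; for `m = n - 1` it is layer `m - 1`, equal to layer `n`.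
  rcases hi.lt_or_eq with hi | rfl
  · rw [ZMod.val_cast_of_lt hi]
  · rw [ZMod.natCast_self, ZMod.val_zero, show skipIdx m 0 = 0 from if_pos hm_pos]
    unfold skipIdx
    split_ifs with h
    · rw [show n - 2 = m - 1 by omega, hf, show m + 1 = n by omega, ZMod.natCast_self,
        Nat.cast_zero]
    · rw [show n - 2 + 2 = n by omega, ZMod.natCast_self, Nat.cast_zero]

lemma fprimeInv_natCast (hm_pos : 0 < m) (hmn : m < n) {j : ℕ} (hj : j ≤ n) (s : Fin k) :
    fprimeInv n k m g v ((j : ZMod n), s) =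
      g ((collapseIdx m j : ZMod (n - 2)), s) + if j = m then v s else 0 := by
  unfold fprimeInv
  rcases hj.lt_or_eq with hj | hj
  · rw [ZMod.val_cast_of_lt hj]
  · rw [hj, ZMod.natCast_self, ZMod.val_zero, show collapseIdx m 0 = 0 from if_pos hm_pos,
      show collapseIdx m n = n - 2 by unfold collapseIdx; split_ifs <;> omega,
      if_neg (by omega), if_neg (by omega), ZMod.natCast_self, Nat.cast_zero]

lemma fprime_fprimeInv (hn : 2 < n) : fprime n k m (fprimeInv n k m g v) = g := by
  have : NeZero n := ⟨by omega⟩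
  have : NeZero (n - 2) := ⟨by omega⟩
  funext ⟨x, s⟩
  have hne : skipIdx m x.val ≠ m := by unfold skipIdx; split_ifs <;> omega
  rw [fprime_apply, fprimeInv, ZMod.val_cast_of_lt (skipIdx_lt (ZMod.val_lt x)),
    collapseIdx_skipIdx, if_neg hne, add_zero, ZMod.natCast_zmod_val]

lemma vf_fprimeInv (hm_pos : 0 < m) (hmn : m < n) : vf n k m (fprimeInv n k m g v) = v := by
  funext s
  rw [vf, fprimeInv_natCast (j := m) hm_pos hmn hmn.le, fprimeInv_natCast hm_pos hmn (by omega),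
    if_pos rfl, if_neg (by omega),
    show collapseIdx m (m - 1) = collapseIdx m m by unfold collapseIdx; split_ifs <;> omega]
  ring

lemma isHomZ_fprime (hn : 4 ≤ n) (hm_pos : 0 < m) (hmn : m < n) (hf : IsHomZ (Cnk n k) f)
    (hfm : ∀ s, f (((m - 1 : ℕ) : ZMod n), s) = f (((m + 1 : ℕ) : ZMod n), s)) :
    IsHomZ (Cnk (n - 2) k) (fprime n k m f) := by
  have hstep := (isHomZ_Cnk_iff (by omega)).1 hf
  refine (isHomZ_Cnk_iff (by omega)).2 fun i hi s t => ?_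
  rw [fprime_natCast hm_pos hmn hfm (by omega), fprime_natCast hm_pos hmn hfm (by omega)]
  by_cases h : i + 1 = m
  · rw [show skipIdx m (i + 1) = m + 1 + 1 by unfold skipIdx; split_ifs <;> omega,
      show skipIdx m i = m - 1 by unfold skipIdx; split_ifs <;> omega, hfm s]
    exact hstep (m + 1) (by omega) s t
  · rw [skipIdx_succ h]
    exact hstep _ (skipIdx_lt (by omega)) s t

lemma isHomZ_fprimeInv (hn : 4 ≤ n) (hm_pos : 0 < m) (hmn : m < n)
    (hg : IsHomZ (Cnk (n - 2) k) g) (hgc : LayerConst g ((m - 1 : ℕ) : ZMod (n - 2)))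
    (hv : ∀ s, |v s| = 1) : IsHomZ (Cnk n k) (fprimeInv n k m g v) := by
  have hstep := (isHomZ_Cnk_iff (by omega)).1 hg
  refine (isHomZ_Cnk_iff (by omega)).2 fun i hi s t => ?_
  rw [fprimeInv_natCast hm_pos hmn (by omega), fprimeInv_natCast hm_pos hmn (by omega)]
  by_cases h₁ : i + 1 = m
  · rw [if_pos h₁, if_neg (by omega),
      show collapseIdx m (i + 1) = m - 1 by unfold collapseIdx; split_ifs <;> omega,
      show collapseIdx m i = m - 1 by unfold collapseIdx; split_ifs <;> omega,
      hgc t s, add_zero, add_sub_cancel_left]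
    exact hv t
  by_cases h₂ : i = m
  · rw [if_neg h₁, if_pos h₂,
      show collapseIdx m (i + 1) = m - 1 by unfold collapseIdx; split_ifs <;> omega,
      show collapseIdx m i = m - 1 by unfold collapseIdx; split_ifs <;> omega,
      hgc t s, add_zero, sub_add_cancel_left, abs_neg]
    exact hv s
  · have hle : collapseIdx m (i + 1) ≤ n - 2 := collapseIdx_le hmn hi
    rw [collapseIdx_succ hm_pos h₁ h₂] at hle ⊢
    rw [if_neg h₁, if_neg h₂, add_zero, add_zero]
    exact hstep _ (by omega) s t

end Evaluation

lemma subset_range_of_subset_Icc {n : ℕ} {I : Finset ℕ} (hI : I ⊆ Finset.Icc 1 (n - 1)) :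
    I ⊆ Finset.range n := fun i hi => by
  have := Finset.mem_Icc.1 (hI hi)
  exact Finset.mem_range.2 (by omega)

section Maps

variable {n k m : ℕ} {hk : 0 < k} {I : Finset ℕ}

lemma erase_subset_range (hI : I ⊆ Finset.Icc 1 (n - 1)) (hm : IsGreatest (I : Set ℕ) m)
    (hm1 : m - 1 ∉ I) : I.erase m ⊆ Finset.range (n - 2) := fun i hi => by
  have := lt_of_mem_erase_of_isGreatest hm hi
  have := Finset.mem_Icc.1 (hI hm.1)
  have : i ≠ m - 1 := fun h => hm1 (h ▸ Finset.mem_of_mem_erase hi)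
  exact Finset.mem_range.2 (by omega)

variable {f : ZMod n × Fin k → ℤ}

lemma apply_pred_eq_apply_succ (hn : 2 ≤ n) (hI : I ⊆ Finset.Icc 1 (n - 1))
    (hm : IsGreatest (I : Set ℕ) m) (hf : f ∈ HIset n k hk I) (s t : Fin k) :
    f (((m - 1 : ℕ) : ZMod n), s) = f (((m + 1 : ℕ) : ZMod n), t) := by
  have hmb := Finset.mem_Icc.1 (hI hm.1)
  have hnc : ¬ LayerConst f ((m - 1 + 1 : ℕ) : ZMod n) := by
    rw [Nat.sub_add_cancel hmb.1, layerConst_natCast_iff (subset_range_of_subset_Icc hI) hf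
      (by omega), not_not]
    exact hm.1
  rw [hf.1.1.1.eq_of_not_layerConst hn (by omega) hnc s t, show m - 1 + 2 = m + 1 by omega]

lemma vf_mem_Vset (hn : 2 ≤ n) (hI : I ⊆ Finset.Icc 1 (n - 1)) (hm : IsGreatest (I : Set ℕ) m)
    (hf : f ∈ HIset n k hk I) : vf n k m f ∈ Vset k := by
  have hmb := Finset.mem_Icc.1 (hI hm.1)
  refine (mem_Vset_iff hk).2 ⟨fun s => ?_, ?_⟩
  · have := (isHomZ_Cnk_iff hn).1 hf.1.1.1 (m - 1) (by omega) s s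
    rwa [Nat.sub_add_cancel hmb.1, abs_eq zero_le_one] at this
  · obtain ⟨s, t, hst⟩ : ∃ s t, f ((m : ZMod n), s) ≠ f ((m : ZMod n), t) := by
      simpa [LayerConst] using
        (layerConst_natCast_iff (subset_range_of_subset_Icc hI) hf (by omega)).not.2
          (not_not.2 hm.1)
    have hpred := (apply_pred_eq_apply_succ hn hI hm hf s t).trans
      (apply_pred_eq_apply_succ hn hI hm hf t t).symm
    refine ⟨s, t, fun h => hst ?_⟩
    simp only [vf] at h
    omega

lemma fprime_mem_HIset (hn : 4 ≤ n) (hI : I ⊆ Finset.Icc 1 (n - 1))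
    (hm : IsGreatest (I : Set ℕ) m) (hm1 : m - 1 ∉ I) (hf : f ∈ HIset n k hk I) :
    fprime n k m f ∈ HIset (n - 2) k hk (I.erase m) := by
  have : NeZero (n - 2) := ⟨by omega⟩
  have hmb := Finset.mem_Icc.1 (hI hm.1)
  have hfm := apply_pred_eq_apply_succ (by omega) hI hm hf
  have heval {i : ℕ} (hi : i ≤ n - 2) (s : Fin k) :=
    fprime_natCast (f := f) hmb.1 (by omega) (fun s => hfm s s) hi s
  refine mem_HIset_of (erase_subset_range hI hm hm1)
    (isHomZ_fprime hn hmb.1 (by omega) hf.1.1.1 fun s => hfm s s) (fun s => ?_) (fun j hj => ?_)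
  · simpa [show skipIdx m 0 = 0 from if_pos hmb.1, hf.1.2 s] using heval (Nat.zero_le _) s
  · simp only [LayerConst, heval hj.le]
    rw [← LayerConst, layerConst_natCast_iff (subset_range_of_subset_Icc hI) hf
      (skipIdx_lt hj).le, skipIdx_mem_iff hm]

variable {g : ZMod (n - 2) × Fin k → ℤ} {v : Fin k → ℤ}

lemma fprimeInv_mem_HIset (hn : 4 ≤ n) (hI : I ⊆ Finset.Icc 1 (n - 1))
    (hm : IsGreatest (I : Set ℕ) m) (hm1 : m - 1 ∉ I) (hg : g ∈ HIset (n - 2) k hk (I.erase m))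
    (hv : v ∈ Vset k) : fprimeInv n k m g v ∈ HIset n k hk I := by
  have : NeZero n := ⟨by omega⟩
  have hmb := Finset.mem_Icc.1 (hI hm.1)
  have hE := erase_subset_range hI hm hm1
  have hgc : LayerConst g ((m - 1 : ℕ) : ZMod (n - 2)) :=
    (layerConst_natCast_iff hE hg (by omega)).2 fun h => hm1 (Finset.mem_of_mem_erase h)
  have heval {j : ℕ} (hj : j ≤ n) (s : Fin k) :=
    fprimeInv_natCast (g := g) (v := v) hmb.1 (by omega) hj s
  obtain ⟨hv1, s₀, t₀, hst⟩ := (mem_Vset_iff hk).1 hv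
  have habs (s : Fin k) : |v s| = 1 := by rcases hv1 s with h | h <;> simp [h]
  refine mem_HIset_of (subset_range_of_subset_Icc hI)
    (isHomZ_fprimeInv hn hmb.1 (by omega) hg.1.1.1 hgc habs) (fun s => ?_) (fun j hj => ?_)
  · simpa [show collapseIdx m 0 = 0 from if_pos hmb.1, hg.1.2 s,
      show (0 : ℕ) ≠ m by omega] using heval (Nat.zero_le _) s
  · by_cases hjm : j = m
    · subst hjm
      refine iff_of_false (fun hc => hst ?_) (not_not.2 hm.1)
      have := hc s₀ t₀
      rw [heval hj.le, heval hj.le, if_pos rfl, if_pos rfl,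
        show collapseIdx j j = j - 1 by unfold collapseIdx; split_ifs <;> omega, hgc s₀ t₀] at this
      exact add_left_cancel this
    · simp only [LayerConst, heval hj.le, if_neg hjm, add_zero]
      rw [← LayerConst, layerConst_natCast_iff hE hg (collapseIdx_le (by omega) hj.le),
        collapseIdx_mem_erase_iff hm hm1 hjm]

lemma fprimeInv_fprime_vf (hn : 4 ≤ n) (hI : I ⊆ Finset.Icc 1 (n - 1))
    (hm : IsGreatest (I : Set ℕ) m) (hf : f ∈ HIset n k hk I) :
    fprimeInv n k m (fprime n k m f) (vf n k m f) = f := by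
  have : NeZero n := ⟨by omega⟩
  have hmb := Finset.mem_Icc.1 (hI hm.1)
  have hfm := apply_pred_eq_apply_succ (by omega) hI hm hf
  funext ⟨x, s⟩
  obtain ⟨j, hj, rfl⟩ : ∃ j < n, (j : ZMod n) = x := ⟨x.val, x.val_lt, ZMod.natCast_zmod_val x⟩
  rw [fprimeInv_natCast hmb.1 (by omega) hj.le,
    fprime_natCast hmb.1 (by omega) (fun s => hfm s s) (collapseIdx_le (by omega) hj.le)]
  by_cases h₁ : j = m
  · subst h₁
    rw [if_pos rfl, show skipIdx j (collapseIdx j j) = j - 1 by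
      unfold skipIdx collapseIdx; split_ifs <;> omega, vf, add_sub_cancel]
  by_cases h₂ : j = m + 1
  · subst h₂
    rw [if_neg h₁, add_zero, show skipIdx m (collapseIdx m (m + 1)) = m - 1 by
      unfold skipIdx collapseIdx; split_ifs <;> omega, hfm s s]
  · rw [if_neg h₁, add_zero, skipIdx_collapseIdx h₁ h₂]

end Maps

theorem stmt11_general (n k : ℕ) (hn : 4 ≤ n) (hk : 0 < k)
    (I : Finset ℕ) (hIne : I.Nonempty)
    (hI : I ⊆ Finset.Icc 1 (n - 1)) (hcons : ∀ i ∈ I, i + 1 ∉ I) :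
    (∀ f ∈ HIset n k hk I,
        fprime n k (I.max' hIne) f ∈ HIset (n - 2) k hk (I.erase (I.max' hIne)) ∧
        vf n k (I.max' hIne) f ∈ Vset k) ∧
    Set.BijOn
      (fun f : ZMod n × Fin k → ℤ => (fprime n k (I.max' hIne) f, vf n k (I.max' hIne) f))
      (HIset n k hk I)
      ((HIset (n - 2) k hk (I.erase (I.max' hIne))) ×ˢ Vset k) := by
  have hm := I.isGreatest_max' hIne
  have hm1 : I.max' hIne - 1 ∉ I := fun h => by
    have := hcons _ h
    rw [Nat.sub_add_cancel (Finset.mem_Icc.1 (hI hm.1)).1] at this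
    exact this hm.1
  have hmaps (f) (hf : f ∈ HIset n k hk I) :=
    And.intro (fprime_mem_HIset hn hI hm hm1 hf) (vf_mem_Vset (by omega) hI hm hf)
  refine ⟨hmaps, Set.InvOn.bijOn (f' := fun p => fprimeInv n k (I.max' hIne) p.1 p.2)
    ⟨fun f hf => fprimeInv_fprime_vf hn hI hm hf, fun p _ => ?_⟩ hmaps
    fun p hp => fprimeInv_mem_HIset hn hI hm hm1 hp.1 hp.2⟩
  have hmb := Finset.mem_Icc.1 (hI hm.1)
  exact Prod.ext (fprime_fprimeInv (by omega)) (vf_fprimeInv hmb.1 (by omega))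

theorem stmt11 (n k : ℕ) (hn : 4 ≤ n) (hne : Even n) (hk : 0 < k)
    (I : Finset ℕ) (hIne : I.Nonempty) (ℓ : ℕ) (hℓ : I.card = ℓ) (hℓ1 : 1 ≤ ℓ)
    (hI : I ⊆ Finset.Icc 1 (n - 1)) (hcons : ∀ i ∈ I, i + 1 ∉ I) :
    (∀ f ∈ HIset n k hk I,
        fprime n k (I.max' hIne) f ∈ HIset (n - 2) k hk (I.erase (I.max' hIne)) ∧
        vf n k (I.max' hIne) f ∈ Vset k) ∧
    Set.BijOn
      (fun f : ZMod n × Fin k → ℤ => (fprime n k (I.max' hIne) f, vf n k (I.max' hIne) f))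
      (HIset n k hk I)
      ((HIset (n - 2) k hk (I.erase (I.max' hIne))) ×ˢ Vset k) :=
  stmt11_general n k hn hk I hIne hI hcons
end
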